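/- Let P and P' be finite graded posets, let c_t denote their GWL colorings, and let h_t denote the message-passing colorings induced by an update function U and initial value h₀ (the same for both posets). If U is injective, then for every t ∈ ℕ, every σ ∈ P and every σ' ∈ P': h_t(σ) = h_t(σ') if and only if c_t(σ) = c_t(σ'). Consequently, the histograms {{h_t(σ) : σ ∈ P}} and {{h_t(σ') : σ' ∈ P'}} agree for every t if and only if P and P' are GWL-equivalent; that is, a message-passing network with injective update has the same expressive power as the GWL test. -/

import Mathlib

/-- The nested color domain of the GWL test: a color at iteration `t+1` is a tuple of the
previous color together with the four adjacency multisets of previous colors. -/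
def GWLC : ℕ → Type
  | 0 => Unit
  | t + 1 => GWLC t × Multiset (GWLC t) × Multiset (GWLC t) ×
      Multiset (GWLC t × GWLC t) × Multiset (GWLC t × GWLC t)

namespace GWL

variable {α : Type}

/-- `Covers lt τ σ` : `τ ⋖ σ`, i.e. `τ < σ` with nothing strictly in between. -/
def Covers (lt : α → α → Prop) (τ σ : α) : Prop :=
  lt τ σ ∧ ¬ ∃ q, lt τ q ∧ lt q σ

/-- A strict order `lt` together with a dimension function `dim` makes a graded poset. -/
structure IsGradedPoset (lt : α → α → Prop) (dim : α → ℕ) : Prop where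
  irrefl : ∀ x, ¬ lt x x
  trans : ∀ x y z, lt x y → lt y z → lt x z
  mono : ∀ x y, lt x y → dim x ≤ dim y
  cover : ∀ x y, Covers lt x y → dim y = dim x + 1

variable [Fintype α]

open Classical in
/-- The boundary `B(σ) = {τ : τ ⋖ σ}`. -/
noncomputable def boundary (lt : α → α → Prop) (σ : α) : Finset α :=
  Finset.univ.filter fun τ => Covers lt τ σ

open Classical in
/-- The coboundary `C(σ) = {τ : σ ⋖ τ}`. -/
noncomputable def coboundary (lt : α → α → Prop) (σ : α) : Finset α :=
  Finset.univ.filter fun τ => Covers lt σ τ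

open Classical in
/-- The lower adjacency `N↓(σ) = {(σ', τ) : τ ⋖ σ, τ ⋖ σ', σ' ≠ σ}`. -/
noncomputable def lowerAdj (lt : α → α → Prop) (σ : α) : Finset (α × α) :=
  Finset.univ.filter fun p => Covers lt p.2 σ ∧ Covers lt p.2 p.1 ∧ p.1 ≠ σ

open Classical in
/-- The upper adjacency `N↑(σ) = {(σ', τ) : σ ⋖ τ, σ' ⋖ τ, σ' ≠ σ}`. -/
noncomputable def upperAdj (lt : α → α → Prop) (σ : α) : Finset (α × α) :=
  Finset.univ.filter fun p => Covers lt σ p.2 ∧ Covers lt p.1 p.2 ∧ p.1 ≠ σ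

/-- The GWL coloring of a finite graded poset (with strict order `lt`). -/
noncomputable def color (lt : α → α → Prop) : (t : ℕ) → α → GWLC t
  | 0, _ => ()
  | t + 1, σ =>
      (color lt t σ,
       (boundary lt σ).val.map (color lt t),
       (coboundary lt σ).val.map (color lt t),
       (lowerAdj lt σ).val.map (fun p => (color lt t p.1, color lt t p.2)),
       (upperAdj lt σ).val.map (fun p => (color lt t p.1, color lt t p.2)))

/-- The histogram of GWL colors at iteration `t`. -/
noncomputable def hist (lt : α → α → Prop) (t : ℕ) : Multiset (GWLC t) :=
  Finset.univ.val.map (color lt t)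

end GWL

namespace GWL

/-- The message-passing coloring on a finite graded poset induced by an update function `U`
and an initial value `h₀`:
`h_{t+1}(σ) = U (h_t σ) {{h_t τ : τ ∈ B σ}} {{h_t τ : τ ∈ C σ}} {{(h_t σ', h_t τ) : (σ',τ) ∈ N↓ σ}} {{(h_t σ', h_t τ) : (σ',τ) ∈ N↑ σ}}`. -/
noncomputable def mp {α D : Type} [Fintype α]
    (U : D → Multiset D → Multiset D → Multiset (D × D) → Multiset (D × D) → D)
    (h₀ : D) (lt : α → α → Prop) : ℕ → α → D
  | 0, _ => h₀
  | t + 1, σ => U (mp U h₀ lt t σ)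
      ((boundary lt σ).val.map (mp U h₀ lt t))
      ((coboundary lt σ).val.map (mp U h₀ lt t))
      ((lowerAdj lt σ).val.map fun p => (mp U h₀ lt t p.1, mp U h₀ lt t p.2))
      ((upperAdj lt σ).val.map fun p => (mp U h₀ lt t p.1, mp U h₀ lt t p.2))

/-- Histogram of message-passing colorings. -/
noncomputable def mpHist {α D : Type} [Fintype α]
    (U : D → Multiset D → Multiset D → Multiset (D × D) → Multiset (D × D) → D)
    (h₀ : D) (lt : α → α → Prop) (t : ℕ) : Multiset D :=
  Finset.univ.val.map (mp U h₀ lt t)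

end GWL



/-!
The message-passing coloring factors through the GWL coloring: reading a nested GWL color with
`U` in place of the tuple constructor gives maps `decode t` with `h_t = decode t ∘ c_t`. When `U`
is injective, every `decode t` is injective (by induction on `t`, using that `Multiset.map` of an
injective map is injective), so features agree exactly when colors agree, and the same holds for
their histograms.
-/

namespace GWL

variable {D : Type}
  (U : D → Multiset D → Multiset D → Multiset (D × D) → Multiset (D × D) → D) (h₀ : D)

noncomputable def decode : (t : ℕ) → GWLC t → D
  | 0, _ => h₀
  | t + 1, x => U (decode t x.1)
      (x.2.1.map (decode t))
      (x.2.2.1.map (decode t))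
      (x.2.2.2.1.map (Prod.map (decode t) (decode t)))
      (x.2.2.2.2.map (Prod.map (decode t) (decode t)))

theorem mp_eq_decode_color {α : Type} [Fintype α] (lt : α → α → Prop) (t : ℕ) (σ : α) :
    mp U h₀ lt t σ = decode U h₀ t (color lt t σ) := by
  induction t generalizing σ with
  | zero => rfl
  | succ t ih =>
    have hmap : ∀ s : Multiset α,
        s.map (mp U h₀ lt t) = (s.map (color lt t)).map (decode U h₀ t) := fun s => by
      rw [Multiset.map_map]
      exact Multiset.map_congr rfl fun x _ => ih x
    have hmapPair : ∀ s : Multiset (α × α),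
        s.map (fun p => (mp U h₀ lt t p.1, mp U h₀ lt t p.2)) =
          (s.map fun p => (color lt t p.1, color lt t p.2)).map
            (Prod.map (decode U h₀ t) (decode U h₀ t)) := fun s => by
      rw [Multiset.map_map]
      exact Multiset.map_congr rfl fun p _ => by simp only [Function.comp, Prod.map, ih]
    simp only [mp, color, decode]
    rw [ih σ, hmap, hmap, hmapPair, hmapPair]

theorem mpHist_eq_map_decode_hist {α : Type} [Fintype α] (lt : α → α → Prop) (t : ℕ) :
    mpHist U h₀ lt t = (hist lt t).map (decode U h₀ t) := by
  simp only [mpHist, hist, Multiset.map_map]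
  exact Multiset.map_congr rfl fun σ _ => mp_eq_decode_color U h₀ lt t σ

variable {U}

theorem decode_injective
    (hU : Function.Injective
      (fun x : D × Multiset D × Multiset D × Multiset (D × D) × Multiset (D × D) =>
        U x.1 x.2.1 x.2.2.1 x.2.2.2.1 x.2.2.2.2))
    (t : ℕ) : Function.Injective (decode U h₀ t) := by
  induction t with
  | zero => exact fun _ _ _ => rfl
  | succ t ih =>
    -- `decode (t + 1)` is definitionally the uncurried `U` after `decode t` applied componentwise.
    have ihMap := Multiset.map_injective ih
    have ihMapPair := Multiset.map_injective (ih.prodMap ih)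
    exact hU.comp (ih.prodMap (ihMap.prodMap (ihMap.prodMap (ihMapPair.prodMap ihMapPair))))

end GWL

theorem injective_message_passing_same_power_as_gwl_general
    {α β D : Type} [Fintype α] [Fintype β]
    (ltα : α → α → Prop) (ltβ : β → β → Prop)
    (U : D → Multiset D → Multiset D → Multiset (D × D) → Multiset (D × D) → D)
    (h₀ : D)
    (hU : Function.Injective
      (fun x : D × Multiset D × Multiset D × Multiset (D × D) × Multiset (D × D) =>
        U x.1 x.2.1 x.2.2.1 x.2.2.2.1 x.2.2.2.2)) :
    (∀ (t : ℕ) (σ : α) (σ' : β),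
        GWL.mp U h₀ ltα t σ = GWL.mp U h₀ ltβ t σ' ↔ GWL.color ltα t σ = GWL.color ltβ t σ') ∧
    ((∀ t : ℕ, GWL.mpHist U h₀ ltα t = GWL.mpHist U h₀ ltβ t) ↔
        (∀ t : ℕ, GWL.hist ltα t = GWL.hist ltβ t)) := by
  refine ⟨fun t σ σ' => ?_, forall_congr' fun t => ?_⟩
  · rw [GWL.mp_eq_decode_color, GWL.mp_eq_decode_color]
    exact (GWL.decode_injective h₀ hU t).eq_iff
  · rw [GWL.mpHist_eq_map_decode_hist, GWL.mpHist_eq_map_decode_hist]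
    exact (Multiset.map_injective (GWL.decode_injective h₀ hU t)).eq_iff

/-- A message-passing network with an injective update function has exactly
the same expressive power as the GWL test: features agree iff GWL colors agree, and the
feature histograms agree at every iteration iff the posets are GWL-equivalent. -/
theorem injective_message_passing_same_power_as_gwl
    {α β D : Type} [Fintype α] [Fintype β]
    (ltα : α → α → Prop) (dimα : α → ℕ) (ltβ : β → β → Prop) (dimβ : β → ℕ)
    (hP : GWL.IsGradedPoset ltα dimα) (hP' : GWL.IsGradedPoset ltβ dimβ)
    (U : D → Multiset D → Multiset D → Multiset (D × D) → Multiset (D × D) → D)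
    (h₀ : D)
    (hU : Function.Injective
      (fun x : D × Multiset D × Multiset D × Multiset (D × D) × Multiset (D × D) =>
        U x.1 x.2.1 x.2.2.1 x.2.2.2.1 x.2.2.2.2)) :
    (∀ (t : ℕ) (σ : α) (σ' : β),
        GWL.mp U h₀ ltα t σ = GWL.mp U h₀ ltβ t σ' ↔ GWL.color ltα t σ = GWL.color ltβ t σ') ∧
    ((∀ t : ℕ, GWL.mpHist U h₀ ltα t = GWL.mpHist U h₀ ltβ t) ↔
        (∀ t : ℕ, GWL.hist ltα t = GWL.hist ltβ t)) :=
  injective_message_passing_same_power_as_gwl_general ltα ltβ U h₀ hU
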